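/- Let A, E ∈ ℝ^{n×n} be symmetric, let υ > 0, p ≥ 0, h ≥ 0, and let Z, δZ, Q ∈ ℝ^{n×n} and a diagonal matrix D ∈ ℝ^{n×n} satisfy: Z + δZ is orthogonal, ‖δZ‖ ≤ pυ, ‖E‖ ≤ p‖A‖υ, A + E = (Z + δZ) D (Z + δZ)ᵀ, and ‖Q − Z‖_F ≤ hυ. Then ‖off(Qᵀ A Q)‖_F ≤ ( h(hυ + 2(1 + pυ)) + √n · p · (3 + 3pυ) ) · ‖A‖ · υ. -/

import Mathlib

open Matrix

noncomputable def specNorm {m n : ℕ} (A : Matrix (Fin m) (Fin n) ℝ) : ℝ :=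
  ‖LinearMap.toContinuousLinearMap (Matrix.toEuclideanLin A)‖

noncomputable def frobNorm {m n : ℕ} (A : Matrix (Fin m) (Fin n) ℝ) : ℝ :=
  Real.sqrt (∑ p, ∑ q, (A p q) ^ 2)

def offDiag {n : ℕ} (A : Matrix (Fin n) (Fin n) ℝ) : Matrix (Fin n) (Fin n) ℝ :=
  fun p q => if p = q then 0 else A p q

def jacobiRot {n : ℕ} (i j : Fin n) (c s : ℝ) : Matrix (Fin n) (Fin n) ℝ :=
  fun p q =>
    if p = i ∧ q = i then c
    else if p = j ∧ q = j then c
    else if p = i ∧ q = j then s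
    else if p = j ∧ q = i then -s
    else if p = q then 1 else 0

open Classical in
noncomputable def eigValsDesc {n : ℕ} (A : Matrix (Fin n) (Fin n) ℝ) : Fin n → ℝ :=
  if hA : A.IsHermitian then
    fun k => (hA.eigenvalues ∘ Tuple.sort hA.eigenvalues) k.rev
  else 0

noncomputable def singValsDesc {m n : ℕ} (A : Matrix (Fin m) (Fin n) ℝ) : Fin n → ℝ :=
  fun k => Real.sqrt (eigValsDesc (Aᵀ * A) k)

/-!
Put `V = Z + δZ`, which is orthogonal, so `D = Vᵀ (A + E) V`; since `D` is diagonal,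
`‖off(Qᵀ A Q)‖_F ≤ ‖Qᵀ A Q - D‖_F`. With `G = Q - V` one has
`Qᵀ A Q - D = Gᵀ A V + Vᵀ A G + Gᵀ A G - Vᵀ E V`, and every term is estimated with
`‖X Y‖_F ≤ ‖X‖ ‖Y‖_F`, `‖G‖_F ≤ hυ + √n pυ` and `‖G‖ ≤ (h + p)υ`. In the quadratic term
`G = (Q - Z) - δZ` is split so that the factor `√n` only ever multiplies `‖δZ‖`.
-/

lemma frobNorm_nonneg {m n : ℕ} (A : Matrix (Fin m) (Fin n) ℝ) : 0 ≤ frobNorm A :=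
  Real.sqrt_nonneg _

lemma specNorm_nonneg {m n : ℕ} (A : Matrix (Fin m) (Fin n) ℝ) : 0 ≤ specNorm A :=
  norm_nonneg _

section Frobenius

attribute [local instance] Matrix.frobeniusNormedAddCommGroup

lemma frobNorm_eq_norm {m n : ℕ} (A : Matrix (Fin m) (Fin n) ℝ) : frobNorm A = ‖A‖ := by
  rw [frobenius_norm_def, frobNorm, Real.sqrt_eq_rpow]
  norm_num [Real.norm_eq_abs, sq_abs]

lemma frobNorm_add_le {m n : ℕ} (A B : Matrix (Fin m) (Fin n) ℝ) :
    frobNorm (A + B) ≤ frobNorm A + frobNorm B := by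
  simpa only [frobNorm_eq_norm] using norm_add_le A B

lemma frobNorm_sub_le {m n : ℕ} (A B : Matrix (Fin m) (Fin n) ℝ) :
    frobNorm (A - B) ≤ frobNorm A + frobNorm B := by
  simpa only [frobNorm_eq_norm] using norm_sub_le A B

lemma frobNorm_transpose {m n : ℕ} (A : Matrix (Fin m) (Fin n) ℝ) :
    frobNorm Aᵀ = frobNorm A := by
  simpa only [frobNorm_eq_norm] using frobenius_norm_transpose A

end Frobenius

lemma frobNorm_one (n : ℕ) : frobNorm (1 : Matrix (Fin n) (Fin n) ℝ) = Real.sqrt n := by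
  simp [frobNorm, one_apply]

lemma frobNorm_eq_sqrt_sum_norm_col_sq {m n : ℕ} (A : Matrix (Fin m) (Fin n) ℝ) :
    frobNorm A = Real.sqrt (∑ q, ‖WithLp.toLp 2 (fun p => A p q)‖ ^ 2) := by
  rw [frobNorm, Finset.sum_comm]
  simp only [EuclideanSpace.norm_eq, Real.norm_eq_abs, sq_abs]
  congr 1
  refine Finset.sum_congr rfl fun q _ => ?_
  rw [Real.sq_sqrt (by positivity)]

lemma frobNorm_offDiag_le_of_isDiag {n : ℕ} (M D : Matrix (Fin n) (Fin n) ℝ) (hD : D.IsDiag) :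
    frobNorm (offDiag M) ≤ frobNorm (M - D) := by
  apply Real.sqrt_le_sqrt
  refine Finset.sum_le_sum fun p _ => Finset.sum_le_sum fun q _ => ?_
  by_cases hpq : p = q
  · simp [offDiag, hpq]
    positivity
  · have hDpq : D p q = 0 := hD hpq
    simp [offDiag, hpq, hDpq]

section L2Operator

open scoped Matrix.Norms.L2Operator

lemma specNorm_eq_norm {m n : ℕ} (A : Matrix (Fin m) (Fin n) ℝ) : specNorm A = ‖A‖ := rfl

lemma specNorm_sub_le {m n : ℕ} (A B : Matrix (Fin m) (Fin n) ℝ) :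
    specNorm (A - B) ≤ specNorm A + specNorm B :=
  norm_sub_le A B

lemma specNorm_transpose {m n : ℕ} (A : Matrix (Fin m) (Fin n) ℝ) :
    specNorm Aᵀ = specNorm A := by
  simpa only [specNorm_eq_norm, conjTranspose_eq_transpose_of_trivial] using
    l2_opNorm_conjTranspose A

lemma specNorm_le_one_of_transpose_mul_self {n : ℕ} (M : Matrix (Fin n) (Fin n) ℝ)
    (hM : Mᵀ * M = 1) : specNorm M ≤ 1 := by
  rw [specNorm_eq_norm]
  have hsq : ‖M‖ * ‖M‖ ≤ 1 := by
    rw [← l2_opNorm_conjTranspose_mul_self, conjTranspose_eq_transpose_of_trivial, hM,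
      ← diagonal_one, l2_opNorm_diagonal]
    exact pi_norm_le_iff_of_nonneg zero_le_one |>.mpr fun _ => by simp
  nlinarith [norm_nonneg M]

lemma frobNorm_mul_le_specNorm_mul_frobNorm {m n k : ℕ} (A : Matrix (Fin m) (Fin n) ℝ)
    (B : Matrix (Fin n) (Fin k) ℝ) : frobNorm (A * B) ≤ specNorm A * frobNorm B := by
  rw [specNorm_eq_norm, frobNorm_eq_sqrt_sum_norm_col_sq, frobNorm_eq_sqrt_sum_norm_col_sq,
    ← Real.sqrt_sq (norm_nonneg A), ← Real.sqrt_mul (sq_nonneg _), Finset.mul_sum]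
  refine Real.sqrt_le_sqrt (Finset.sum_le_sum fun q _ => ?_)
  rw [← mul_pow]
  have hcol : WithLp.toLp 2 (fun p => (A * B) p q)
      = (EuclideanSpace.equiv (Fin m) ℝ).symm (A *ᵥ fun p => B p q) := by
    ext p
    simp only [mul_apply, EuclideanSpace.equiv]
    rfl
  rw [hcol]
  have := l2_opNorm_mulVec A (WithLp.toLp 2 fun p => B p q)
  exact pow_le_pow_left₀ (norm_nonneg _) this 2

lemma specNorm_le_frobNorm {m n : ℕ} (A : Matrix (Fin m) (Fin n) ℝ) : specNorm A ≤ frobNorm A := by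
  refine ContinuousLinearMap.opNorm_le_bound _ (frobNorm_nonneg A) fun x => ?_
  rw [LinearMap.coe_toContinuousLinearMap', toLpLin_apply, EuclideanSpace.norm_eq,
    EuclideanSpace.norm_eq, frobNorm, ← Real.sqrt_mul (by positivity)]
  refine Real.sqrt_le_sqrt ?_
  simp only [Real.norm_eq_abs, sq_abs]
  rw [Finset.sum_mul]
  exact Finset.sum_le_sum fun p _ => Finset.sum_mul_sq_le_sq_mul_sq Finset.univ (A p) x

end L2Operator

lemma frobNorm_le_sqrt_mul_specNorm {m n : ℕ} (A : Matrix (Fin m) (Fin n) ℝ) :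
    frobNorm A ≤ Real.sqrt n * specNorm A := by
  calc frobNorm A = frobNorm (A * 1) := by rw [Matrix.mul_one]
    _ ≤ specNorm A * frobNorm (1 : Matrix (Fin n) (Fin n) ℝ) :=
      frobNorm_mul_le_specNorm_mul_frobNorm A 1
    _ = Real.sqrt n * specNorm A := by rw [frobNorm_one, mul_comm]

lemma frobNorm_mul_le_frobNorm_mul_specNorm {m n k : ℕ} (A : Matrix (Fin m) (Fin n) ℝ)
    (B : Matrix (Fin n) (Fin k) ℝ) : frobNorm (A * B) ≤ frobNorm A * specNorm B := by
  calc frobNorm (A * B) = frobNorm (Bᵀ * Aᵀ) := by rw [← transpose_mul, frobNorm_transpose]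
    _ ≤ specNorm Bᵀ * frobNorm Aᵀ := frobNorm_mul_le_specNorm_mul_frobNorm _ _
    _ = frobNorm A * specNorm B := by rw [specNorm_transpose, frobNorm_transpose, mul_comm]

lemma frobNorm_transpose_mul_mul_le_left {k l m n : ℕ} (X : Matrix (Fin k) (Fin m) ℝ)
    (A : Matrix (Fin k) (Fin l) ℝ) (Y : Matrix (Fin l) (Fin n) ℝ) :
    frobNorm (Xᵀ * A * Y) ≤ frobNorm X * specNorm A * specNorm Y :=
  calc frobNorm (Xᵀ * A * Y) ≤ frobNorm (Xᵀ * A) * specNorm Y :=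
        frobNorm_mul_le_frobNorm_mul_specNorm _ _
    _ ≤ frobNorm X * specNorm A * specNorm Y := by
        gcongr
        · exact specNorm_nonneg Y
        · simpa only [frobNorm_transpose] using frobNorm_mul_le_frobNorm_mul_specNorm Xᵀ A

lemma frobNorm_transpose_mul_mul_le_right {k l m n : ℕ} (X : Matrix (Fin k) (Fin m) ℝ)
    (A : Matrix (Fin k) (Fin l) ℝ) (Y : Matrix (Fin l) (Fin n) ℝ) :
    frobNorm (Xᵀ * A * Y) ≤ specNorm X * specNorm A * frobNorm Y :=
  calc frobNorm (Xᵀ * A * Y) ≤ specNorm Xᵀ * frobNorm (A * Y) := by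
        rw [Matrix.mul_assoc]; exact frobNorm_mul_le_specNorm_mul_frobNorm _ _
    _ ≤ specNorm X * specNorm A * frobNorm Y := by
        rw [specNorm_transpose, mul_assoc]
        gcongr
        · exact specNorm_nonneg X
        · exact frobNorm_mul_le_specNorm_mul_frobNorm A Y

lemma frobNorm_sub_transpose_mul_mul_le {k l m n : ℕ} (F δ : Matrix (Fin k) (Fin m) ℝ)
    (A : Matrix (Fin k) (Fin l) ℝ) (G : Matrix (Fin l) (Fin n) ℝ) :
    frobNorm ((F - δ)ᵀ * A * G) ≤
      frobNorm F * specNorm A * specNorm G + specNorm δ * specNorm A * frobNorm G := by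
  rw [transpose_sub, Matrix.sub_mul, Matrix.sub_mul]
  exact (frobNorm_sub_le _ _).trans <| add_le_add (frobNorm_transpose_mul_mul_le_left F A G)
    (frobNorm_transpose_mul_mul_le_right δ A G)

lemma transpose_mul_mul_sub_eq_of_orthogonal {n : ℕ} {A E V D : Matrix (Fin n) (Fin n) ℝ}
    (hV : Vᵀ * V = 1) (hfac : A + E = V * D * Vᵀ) (Q : Matrix (Fin n) (Fin n) ℝ) :
    Qᵀ * A * Q - D =
      (Q - V)ᵀ * A * V + Vᵀ * A * (Q - V) + (Q - V)ᵀ * A * (Q - V) - Vᵀ * E * V := by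
  have hD : D = Vᵀ * (A + E) * V := by
    rw [hfac, show Vᵀ * (V * D * Vᵀ) * V = (Vᵀ * V) * D * (Vᵀ * V) by noncomm_ring, hV,
      Matrix.one_mul, Matrix.mul_one]
  rw [hD, transpose_sub]
  noncomm_ring

lemma frobNorm_offDiag_le_of_orthogonal {n : ℕ} {A E V D : Matrix (Fin n) (Fin n) ℝ}
    (hV : Vᵀ * V = 1) (hD : D.IsDiag) (hfac : A + E = V * D * Vᵀ) (Q : Matrix (Fin n) (Fin n) ℝ) :
    frobNorm (offDiag (Qᵀ * A * Q)) ≤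
      2 * specNorm A * frobNorm (Q - V) + frobNorm ((Q - V)ᵀ * A * (Q - V)) +
        Real.sqrt n * specNorm E := by
  have hV1 : specNorm V ≤ 1 := specNorm_le_one_of_transpose_mul_self V hV
  have hleft : frobNorm ((Q - V)ᵀ * A * V) ≤ frobNorm (Q - V) * specNorm A :=
    (frobNorm_transpose_mul_mul_le_left _ _ _).trans <|
      mul_le_of_le_one_right (mul_nonneg (frobNorm_nonneg _) (specNorm_nonneg _)) hV1
  have hright : frobNorm (Vᵀ * A * (Q - V)) ≤ specNorm A * frobNorm (Q - V) := by
    refine (frobNorm_transpose_mul_mul_le_right _ _ _).trans ?_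
    rw [mul_assoc]
    exact mul_le_of_le_one_left (mul_nonneg (specNorm_nonneg _) (frobNorm_nonneg _)) hV1
  have hpert : frobNorm (Vᵀ * E * V) ≤ Real.sqrt n * specNorm E := by
    have hV_frob : frobNorm V ≤ Real.sqrt n :=
      (frobNorm_le_sqrt_mul_specNorm V).trans (mul_le_of_le_one_right (Real.sqrt_nonneg n) hV1)
    calc frobNorm (Vᵀ * E * V) ≤ specNorm V * specNorm E * frobNorm V :=
          frobNorm_transpose_mul_mul_le_right _ _ _
      _ ≤ 1 * specNorm E * Real.sqrt n :=
          mul_le_mul (mul_le_mul_of_nonneg_right hV1 (specNorm_nonneg E)) hV_frob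
            (frobNorm_nonneg V) (by simpa only [one_mul] using specNorm_nonneg E)
      _ = Real.sqrt n * specNorm E := by ring
  calc frobNorm (offDiag (Qᵀ * A * Q)) ≤ frobNorm (Qᵀ * A * Q - D) :=
        frobNorm_offDiag_le_of_isDiag _ _ hD
    _ = frobNorm ((Q - V)ᵀ * A * V + Vᵀ * A * (Q - V) + (Q - V)ᵀ * A * (Q - V) - Vᵀ * E * V) := by
        rw [transpose_mul_mul_sub_eq_of_orthogonal hV hfac]
    _ ≤ frobNorm ((Q - V)ᵀ * A * V) + frobNorm (Vᵀ * A * (Q - V)) +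
          frobNorm ((Q - V)ᵀ * A * (Q - V)) + frobNorm (Vᵀ * E * V) :=
        (frobNorm_sub_le _ _).trans <| add_le_add_left
          ((frobNorm_add_le _ _).trans <| add_le_add_left (frobNorm_add_le _ _) _) _
    _ ≤ _ := by linarith

theorem off_QAQ_precision_bound_general {n : ℕ} (A E Z δZ Q D : Matrix (Fin n) (Fin n) ℝ)
    (υ p h : ℝ)
    (horth : (Z + δZ)ᵀ * (Z + δZ) = 1)
    (hδZ : specNorm δZ ≤ p * υ)
    (hEb : specNorm E ≤ p * specNorm A * υ)
    (hD : D.IsDiag)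
    (hfac : A + E = (Z + δZ) * D * (Z + δZ)ᵀ)
    (hQZ : frobNorm (Q - Z) ≤ h * υ) :
    frobNorm (offDiag (Qᵀ * A * Q)) ≤
      (h * (h * υ + 2 * (1 + p * υ)) + Real.sqrt n * p * (3 + 3 * p * υ)) *
        specNorm A * υ := by
  have ha : 0 ≤ specNorm A := specNorm_nonneg A
  have hpυ : 0 ≤ p * υ := (specNorm_nonneg δZ).trans hδZ
  have hhυ : 0 ≤ h * υ := (frobNorm_nonneg _).trans hQZ
  have hG_frob : frobNorm (Q - Z - δZ) ≤ h * υ + Real.sqrt n * (p * υ) :=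
    (frobNorm_sub_le _ _).trans <| add_le_add hQZ <|
      (frobNorm_le_sqrt_mul_specNorm δZ).trans (by gcongr)
  have hG_spec : specNorm (Q - Z - δZ) ≤ h * υ + p * υ :=
    (specNorm_sub_le _ _).trans <| add_le_add ((specNorm_le_frobNorm _).trans hQZ) hδZ
  have hquad : frobNorm ((Q - Z - δZ)ᵀ * A * (Q - Z - δZ)) ≤
      h * υ * specNorm A * (h * υ + p * υ) +
        p * υ * specNorm A * (h * υ + Real.sqrt n * (p * υ)) := by
    refine (frobNorm_sub_transpose_mul_mul_le _ _ _ _).trans ?_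
    gcongr
    · exact specNorm_nonneg _
    · exact frobNorm_nonneg _
  calc frobNorm (offDiag (Qᵀ * A * Q))
      ≤ 2 * specNorm A * frobNorm (Q - Z - δZ) + frobNorm ((Q - Z - δZ)ᵀ * A * (Q - Z - δZ)) +
          Real.sqrt n * specNorm E := by
        simpa only [sub_add_eq_sub_sub] using frobNorm_offDiag_le_of_orthogonal horth hD hfac Q
    _ ≤ 2 * specNorm A * (h * υ + Real.sqrt n * (p * υ)) +
          (h * υ * specNorm A * (h * υ + p * υ) +
            p * υ * specNorm A * (h * υ + Real.sqrt n * (p * υ))) +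
          Real.sqrt n * (p * specNorm A * υ) := by gcongr
    -- the two sides differ by `2 √n (pυ)² ‖A‖`
    _ ≤ _ := by linarith [mul_nonneg (mul_nonneg (Real.sqrt_nonneg n) (sq_nonneg (p * υ))) ha]

/-- Quantitative bound on `‖off(Qᵀ A Q)‖_F` in terms of the precision `υ`. -/
theorem off_QAQ_precision_bound {n : ℕ} (A E Z δZ Q D : Matrix (Fin n) (Fin n) ℝ)
    (hA : Aᵀ = A) (hE : Eᵀ = E)
    (υ p h : ℝ) (hυ : 0 < υ) (hp : 0 ≤ p) (hh : 0 ≤ h)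
    (horth : (Z + δZ)ᵀ * (Z + δZ) = 1)
    (hδZ : specNorm δZ ≤ p * υ)
    (hEb : specNorm E ≤ p * specNorm A * υ)
    (hD : D.IsDiag)
    (hfac : A + E = (Z + δZ) * D * (Z + δZ)ᵀ)
    (hQZ : frobNorm (Q - Z) ≤ h * υ) :
    frobNorm (offDiag (Qᵀ * A * Q)) ≤
      (h * (h * υ + 2 * (1 + p * υ)) + Real.sqrt n * p * (3 + 3 * p * υ)) *
        specNorm A * υ :=
  off_QAQ_precision_bound_general A E Z δZ Q D υ p h horth hδZ hEb hD hfac hQZ
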